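/- With g the pointwise bilinear form on ℝ⁵ defined by declaring the frame (X, ∂_u, V₁, V₂, 2∂_t+∂_z) to have Gram matrix [[0,1,0,0,0],[1,0,0,0,0],[0,0,1,0,0],[0,0,0,1,0],[0,0,0,0,1]] (X as in Thurston's construction), the 1-form v ↦ g(X, v) equals du at every point, and in particular it is a closed 1-form. -/

import Mathlib

open Real Matrix

/-- Coordinate vector of Thurston's vector field
`X = sin(2u) V₁ + 2sin²(u) ∂_t - cos²(u) ∂_z` at `p = (x,y,z,t,u)`. -/
noncomputable def Xvec (p : Fin 5 → ℝ) : Fin 5 → ℝ :=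
  ![Real.sin (2 * p 4) * Real.cos (p 3),
    Real.sin (2 * p 4) * Real.sin (p 3),
    Real.sin (2 * p 4) * (p 0 * Real.sin (p 3)) - Real.cos (p 4) ^ 2,
    2 * Real.sin (p 4) ^ 2,
    0]

/-- The matrix whose columns are the frame `(X, ∂_u, V₁, V₂, 2∂_t + ∂_z)`
at `p = (x,y,z,t,u)`. -/
noncomputable def frameMat (p : Fin 5 → ℝ) : Matrix (Fin 5) (Fin 5) ℝ :=
  (Matrix.of
    ![Xvec p,
      ![0, 0, 0, 0, 1],
      ![Real.cos (p 3), Real.sin (p 3), p 0 * Real.sin (p 3), 0, 0],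
      ![-Real.sin (p 3), Real.cos (p 3), p 0 * Real.cos (p 3), 0, 0],
      ![0, 0, 1, 2, 0]])ᵀ

/-- The Gram matrix prescribed for the frame `(X, ∂_u, V₁, V₂, 2∂_t+∂_z)`. -/
noncomputable def J₀ : Matrix (Fin 5) (Fin 5) ℝ :=
  !![0, 1, 0, 0, 0;
     1, 0, 0, 0, 0;
     0, 0, 1, 0, 0;
     0, 0, 0, 1, 0;
     0, 0, 0, 0, 1]

/-- The coordinate matrix of the metric `g` whose matrix in the frame
`(X, ∂_u, V₁, V₂, 2∂_t+∂_z)` is `J₀`. -/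
noncomputable def gMat (p : Fin 5 → ℝ) : Matrix (Fin 5) (Fin 5) ℝ :=
  ((frameMat p)⁻¹)ᵀ * J₀ * (frameMat p)⁻¹

/-! In the frame `F = (X, ∂_u, V₁, V₂, 2∂_t + ∂_z)` the field `X` has coordinates `e₀`, so
`g(X, ·)` is the covector taking the values `e₀ ᵀ J₀ = (0,1,0,0,0)` on the frame. Since only `∂_u`
has a `u`-component, `du` takes exactly the same values, and `F` is invertible (`det F = 2`), so
`g(X, ·) = du`. Closedness is then automatic: `du` has constant coefficients. -/

theorem vecMul_transpose_inv_mul_mul_inv {R n : Type*} [CommRing R] [Fintype n] [DecidableEq n]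
    {F J : Matrix n n R} (hF : IsUnit F.det) {a b x : n → R}
    (hx : F *ᵥ a = x) (hb : b ᵥ* F = a ᵥ* J) :
    x ᵥ* ((F⁻¹)ᵀ * J * F⁻¹) = b := by
  have ha : x ᵥ* (F⁻¹)ᵀ = a := by
    rw [vecMul_transpose, ← hx, mulVec_mulVec, nonsing_inv_mul F hF, one_mulVec]
  rw [← vecMul_vecMul, ← vecMul_vecMul, ha, ← hb, vecMul_vecMul, mul_nonsing_inv F hF,
    vecMul_one]

theorem frameMat_det (p : Fin 5 → ℝ) : (frameMat p).det = 2 := by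
  rw [frameMat, det_transpose, det_succ_row _ 1]
  simp only [Nat.succ_eq_add_one, Nat.reduceAdd, Fin.isValue, Fin.coe_ofNat_eq_mod, Nat.one_mod,
    Xvec, of_apply, cons_val', cons_val_fin_one, cons_val_one, cons_val_zero, det_succ_row_zero,
    submatrix_apply, Fin.succAbove, Fin.castSucc_zero, zero_lt_one, ↓reduceIte, submatrix_submatrix,
    Function.comp_apply, Fin.succ_zero_eq_one, Fin.castSucc_one, lt_self_iff_false,
    Fin.succ_one_eq_two, cons_val, Fin.reduceCastSucc, Fin.lt_one_iff, Fin.reduceEq, Fin.reduceSucc,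
    det_unique, Fin.default_eq_zero, Fin.sum_univ_succ, Nat.zero_mod, pow_zero, one_mul,
    Finset.univ_unique, Fin.val_succ, Fin.val_eq_zero, zero_add, pow_one, Fin.castSucc_succ,
    neg_mul, Fin.succ_pos, Finset.sum_neg_distrib, Finset.sum_singleton, not_lt_zero, even_two,
    Even.neg_pow, one_pow, Fin.reduceLT, add_zero, mul_zero, zero_mul, neg_zero, mul_one,
    cons_val_succ, mul_neg, neg_neg]
  linear_combination (2 * (sin (p 3) ^ 2 + cos (p 3) ^ 2)) * sin_sq_add_cos_sq (p 4)
    + 2 * sin_sq_add_cos_sq (p 3)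

theorem frameMat_mulVec_single_zero (p : Fin 5 → ℝ) : frameMat p *ᵥ Pi.single 0 1 = Xvec p := by
  rw [mulVec_single_one]; rfl

theorem single_four_vecMul_frameMat (p : Fin 5 → ℝ) :
    Pi.single 4 1 ᵥ* frameMat p = (Pi.single 0 1 : Fin 5 → ℝ) ᵥ* J₀ := by
  rw [single_one_vecMul, single_one_vecMul]
  ext j; fin_cases j <;> simp [frameMat, J₀, Xvec]

theorem Xvec_vecMul_gMat (p : Fin 5 → ℝ) : Xvec p ᵥ* gMat p = Pi.single 4 1 :=
  vecMul_transpose_inv_mul_mul_inv (by simp [frameMat_det]) (frameMat_mulVec_single_zero p)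
    (single_four_vecMul_frameMat p)

theorem Xvec_dotProduct_gMat_mulVec (p v : Fin 5 → ℝ) : Xvec p ⬝ᵥ gMat p *ᵥ v = v 4 := by
  rw [dotProduct_mulVec, Xvec_vecMul_gMat, single_one_dotProduct]

/-- The 1-form `v ↦ g(X,v)` equals `du` at every point, and in particular it
is a closed 1-form (`dω = 0`, expressed via the antisymmetrized derivative
against constant vector fields). -/
theorem Xflat_eq_du :
    (∀ (p v : Fin 5 → ℝ), Xvec p ⬝ᵥ (gMat p).mulVec v = v 4) ∧
    (∀ (p v w : Fin 5 → ℝ),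
      fderiv ℝ (fun q => Xvec q ⬝ᵥ (gMat q).mulVec w) p v
        - fderiv ℝ (fun q => Xvec q ⬝ᵥ (gMat q).mulVec v) p w = 0) := by
  refine ⟨Xvec_dotProduct_gMat_mulVec, fun p v w => ?_⟩
  simp [Xvec_dotProduct_gMat_mulVec]
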